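/- arXiv:1102.4600 — 3 statements merged into one kernel-verified Lean document; each statement's English description precedes it below -/
import Mathlib

section
/- For every irrational x ∈ (0,1) and every integer n ≥ 0, 𝐓^n(x_0, y_0) = (T^{n+1}(x), −q_{n+1}/q_n); that is, the first coordinate of the n-th iterate is [a_{n+2}, a_{n+3}, ...] and the second coordinate is −a_{n+1} − [a_n, ..., a_1] = −q_{n+1}/q_n. -/
open Real MeasureTheory Filter Set
open scoped Classical

noncomputable section

/-- The Gauss map `T x = 1/x - ⌊1/x⌋`. -/
def gaussMap (x : ℝ) : ℝ := 1/x - ⌊1/x⌋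

/-- The natural extension `𝐓(x,y) = (1/x - ⌊1/x⌋, 1/y - ⌊1/x⌋)`. -/
def natExt (p : ℝ × ℝ) : ℝ × ℝ := (1/p.1 - ⌊1/p.1⌋, 1/p.2 - ⌊1/p.1⌋)

/-- `(x₀, y₀) = 𝐓(x, ∞) = (1/x - ⌊1/x⌋, -⌊1/x⌋)`. -/
def initPt (x : ℝ) : ℝ × ℝ := (1/x - ⌊1/x⌋, -(⌊1/x⌋ : ℝ))

/-- Partial quotient `a_n = ⌊1 / T^{n-1} x⌋` (indexed from 1). -/
def cfA (x : ℝ) (n : ℕ) : ℤ := ⌊1 / (gaussMap^[n-1] x)⌋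

/-- The pair `(p_n, q_n)` of numerator and denominator of the `n`-th convergent. -/
def pq (x : ℝ) : ℕ → ℤ × ℤ
  | 0 => (0, 1)
  | 1 => (1, ⌊1/x⌋)
  | n+2 => (cfA x (n+2) * (pq x (n+1)).1 + (pq x n).1,
            cfA x (n+2) * (pq x (n+1)).2 + (pq x n).2)

def pconv (x : ℝ) (n : ℕ) : ℤ := (pq x n).1
def qconv (x : ℝ) (n : ℕ) : ℤ := (pq x n).2

/-- `θ_n(x) = q_n |q_n x - p_n|`. -/
def theta (x : ℝ) (n : ℕ) : ℝ := (qconv x n : ℝ) * |(qconv x n : ℝ) * x - (pconv x n : ℝ)|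

/-- `Ω = (0,1) × (-∞,-1)`. -/
def Ωset : Set (ℝ × ℝ) := Set.Ioo (0:ℝ) 1 ×ˢ Set.Iio (-1 : ℝ)

/-- `Ω_α = {(x,y) ∈ Ω : 1/(x-y) < α}`. -/
def Ωα (α : ℝ) : Set (ℝ × ℝ) := {p ∈ Ωset | 1 / (p.1 - p.2) < α}

/-- First return time to `Ω_α` (defined as `sInf`, so `0` when undefined). -/
def tauα (α : ℝ) (p : ℝ × ℝ) : ℕ := sInf {n : ℕ | 1 ≤ n ∧ natExt^[n] p ∈ Ωα α}

/-- First return map `𝐓_α`. -/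
def retMap (α : ℝ) (p : ℝ × ℝ) : ℝ × ℝ := natExt^[tauα α p] p

/-- The invariant measure `μ` with density `(log 2)⁻¹ (x-y)⁻²` on `Ω`. -/
def μnat : Measure (ℝ × ℝ) :=
  (volume.restrict Ωset).withDensity
    (fun p => ENNReal.ofReal ((Real.log 2)⁻¹ * ((p.1 - p.2)⁻¹)^2))

/-- `c_α = (log 2 · μ(Ω_α))⁻¹`, explicitly. -/
def cα (α : ℝ) : ℝ := if 1/2 < α then (1 - α + Real.log 2 + Real.log α)⁻¹ else α⁻¹

/-- The probability measure `μ_α` with density `c_α (x-y)⁻²` on `Ω_α`. -/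
def μmeas (α : ℝ) : Measure (ℝ × ℝ) :=
  (volume.restrict (Ωα α)).withDensity
    (fun p => ENNReal.ofReal (cα α * ((p.1 - p.2)⁻¹)^2))

/-- `Ω_α⁻ = {(x,y) ∈ Ω : α < x, y < αx/(α-x)}`. -/
def Ωminus (α : ℝ) : Set (ℝ × ℝ) := {p ∈ Ωset | α < p.1 ∧ p.2 < α * p.1 / (α - p.1)}

open scoped Classical

/-! The first coordinate of `𝐓` is the Gauss map, and the second one transforms
`-q_{n+1}/q_n` into `-q_n/q_{n+1} - a_{n+2} = -q_{n+2}/q_{n+1}`, which is the recurrence for the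
denominators `q_n`; both claims follow by induction on `n`. -/

lemma gaussMap_eq_fract (y : ℝ) : gaussMap y = Int.fract (1 / y) := rfl

lemma natExt_apply (p : ℝ × ℝ) : natExt p = (gaussMap p.1, 1 / p.2 - ⌊1 / p.1⌋) := rfl

lemma irrational_gaussMap {y : ℝ} (hy : Irrational y) : Irrational (gaussMap y) := by
  rw [gaussMap_eq_fract, Int.fract]
  exact (one_div y ▸ hy.inv).sub_intCast _

lemma irrational_iterate_gaussMap {y : ℝ} (hy : Irrational y) (n : ℕ) :
    Irrational (gaussMap^[n] y) := by
  induction n with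
  | zero => exact hy
  | succ n ih => exact Function.iterate_succ_apply' gaussMap n y ▸ irrational_gaussMap ih

lemma gaussMap_mem_Ioo {y : ℝ} (hy : Irrational y) : gaussMap y ∈ Ioo (0 : ℝ) 1 := by
  have hne : gaussMap y ≠ 0 := (irrational_gaussMap hy).ne_zero
  rw [gaussMap_eq_fract] at hne ⊢
  exact ⟨(Int.fract_nonneg _).lt_of_ne hne.symm, Int.fract_lt_one _⟩

lemma one_le_floor_one_div {y : ℝ} (hy₀ : 0 < y) (hy₁ : y ≤ 1) : 1 ≤ ⌊1 / y⌋ :=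
  Int.le_floor.mpr (by simpa using one_le_one_div hy₀ hy₁)

lemma cfA_succ (x : ℝ) (n : ℕ) : cfA x (n + 1) = ⌊1 / gaussMap^[n] x⌋ := rfl

lemma one_le_cfA {x : ℝ} (hirr : Irrational x) (hx : x ∈ Ioo (0 : ℝ) 1) (n : ℕ) :
    1 ≤ cfA x (n + 1) := by
  have hmem : gaussMap^[n] x ∈ Ioo (0 : ℝ) 1 := by
    cases n with
    | zero => exact hx
    | succ n =>
      rw [Function.iterate_succ_apply']
      exact gaussMap_mem_Ioo (irrational_iterate_gaussMap hirr n)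
  exact one_le_floor_one_div hmem.1 hmem.2.le

lemma qconv_zero (x : ℝ) : qconv x 0 = 1 := rfl

lemma qconv_one (x : ℝ) : qconv x 1 = ⌊1 / x⌋ := rfl

lemma qconv_succ_succ (x : ℝ) (n : ℕ) :
    qconv x (n + 2) = cfA x (n + 2) * qconv x (n + 1) + qconv x n := rfl

lemma qconv_pos {x : ℝ} (hirr : Irrational x) (hx : x ∈ Ioo (0 : ℝ) 1) (n : ℕ) :
    0 < qconv x n := by
  induction n using Nat.twoStepInduction with
  | zero => simp [qconv_zero]
  | one => exact zero_lt_one.trans_le (one_le_cfA hirr hx 0)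
  | more n ih₀ ih₁ =>
    rw [qconv_succ_succ]
    have ha := one_le_cfA hirr hx (n + 1)
    positivity

lemma one_div_neg_div_sub {a b c : ℝ} (hb : b ≠ 0) :
    1 / -(b / c) - a = -((a * b + c) / b) := by
  rw [div_neg, one_div_div]
  field_simp
  ring

/-- `𝐓^n(x₀, y₀) = (T^{n+1}(x), -q_{n+1}/q_n)`. -/
theorem stmt_1 (x : ℝ) (hirr : Irrational x) (hx : x ∈ Set.Ioo (0:ℝ) 1) (n : ℕ) :
    natExt^[n] (initPt x) =
      (gaussMap^[n+1] x, -((qconv x (n+1) : ℝ) / (qconv x n : ℝ))) := by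
  induction n with
  | zero => simp [initPt, gaussMap, qconv_zero, qconv_one]
  | succ k ih =>
    rw [Function.iterate_succ_apply', ih, natExt_apply, ← Function.iterate_succ_apply' gaussMap,
      qconv_succ_succ, cfA_succ, one_div_neg_div_sub (by exact_mod_cast (qconv_pos hirr hx _).ne')]
    push_cast
    rfl
end
end

section
/- For α ∈ (0,1], the μ-measure of Ω_α = {(x,y) ∈ Ω : 1/(x−y) < α} equals (log 2)^{−1}(1 − α + log 2 + log α) if 1/2 ≤ α ≤ 1, and equals (log 2)^{−1} α if 0 < α ≤ 1/2. -/
open Real MeasureTheory Filter Set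
open scoped Classical

noncomputable section

/-
Over `x ∈ (0,1)` the fibre of `Ω_α` is `y < min (-1) (x - 1/α)`, and
`∫_{-∞}^m (x - y)⁻² dy = (x - m)⁻¹`, so `log 2 · μ(Ω_α) = ∫₀¹ min α (x + 1)⁻¹ dx`.
The minimum is `α` up to `x = 1/α - 1` and `(x + 1)⁻¹` beyond it. This breakpoint lies in `[0, 1]`
exactly when `1/2 ≤ α ≤ 1`, which gives `(1 - α) + log (2α)`; for `α ≤ 1/2` the integrand is
constantly `α`.
-/

lemma lintegral_Iio_inv_sub_sq {x m : ℝ} (h : m < x) :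
    ∫⁻ y in Iio m, ENNReal.ofReal ((x - y)⁻¹ ^ 2) = ENNReal.ofReal (x - m)⁻¹ := by
  have hxm : 0 < x - m := sub_pos.mpr h
  have hpre : (fun y : ℝ => x - y) ⁻¹' Ioi (x - m) = Iio m := by
    ext y; simp
  have hcongr : ∀ t ∈ Ioi (x - m), ENNReal.ofReal (t⁻¹ ^ 2) = ENNReal.ofReal (t ^ (-2 : ℝ)) :=
    fun t ht => by rw [rpow_neg (hxm.trans ht).le, rpow_two, inv_pow]
  rw [← hpre, (Measure.measurePreserving_sub_left volume x).setLIntegral_comp_preimage_emb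
      (Homeomorph.subLeft x).measurableEmbedding (fun t => ENNReal.ofReal (t⁻¹ ^ 2)) _,
    setLIntegral_congr_fun measurableSet_Ioi hcongr,
    ← ofReal_integral_eq_lintegral_ofReal (integrableOn_Ioi_rpow_of_lt (by norm_num) hxm)
      (ae_restrict_of_forall_mem measurableSet_Ioi fun t ht =>
        (rpow_pos_of_pos (hxm.trans ht) _).le),
    integral_Ioi_rpow_of_lt (by norm_num) hxm]
  norm_num [rpow_neg_one]

lemma setLIntegral_prod_subgraph {β : Type*} [MeasurableSpace β] {μ : Measure β} {ν : Measure ℝ}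
    [SFinite ν] {s : Set β} (hs : MeasurableSet s) {g : β → ℝ} (hg : Measurable g)
    {f : β × ℝ → ENNReal} (hf : Measurable f) :
    ∫⁻ p in {p | p.1 ∈ s ∧ p.2 < g p.1}, f p ∂μ.prod ν =
      ∫⁻ x in s, ∫⁻ y in Iio (g x), f (x, y) ∂ν ∂μ := by
  have hS : MeasurableSet {p : β × ℝ | p.1 ∈ s ∧ p.2 < g p.1} :=
    (measurable_fst hs).inter (measurableSet_lt measurable_snd (hg.comp measurable_fst))
  rw [← lintegral_indicator hS, lintegral_prod _ (hf.indicator hS).aemeasurable,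
    ← lintegral_indicator hs]
  congr 1 with x
  by_cases hx : x ∈ s
  · rw [indicator_of_mem hx, ← lintegral_indicator measurableSet_Iio]
    congr 1 with y
    simp [indicator, hx]
  · simp [indicator, hx]

lemma Ωα_eq_subgraph {α : ℝ} (hα : 0 < α) :
    Ωα α = {p | p.1 ∈ Ioo 0 1 ∧ p.2 < min (-1) (p.1 - α⁻¹)} := by
  ext ⟨x, y⟩
  simp only [Ωα, Ωset, mem_prod, mem_ofPred_eq, mem_Iio, lt_min_iff, and_assoc]
  refine and_congr_right fun hx => and_congr_right fun _ => ?_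
  rw [one_div, inv_lt_comm₀ (by linarith [hx.1]) hα, lt_sub_comm]

lemma inv_sub_min_eq_min_inv {α : ℝ} (hα : 0 < α) {x : ℝ} (hx : 0 < x) :
    (x - min (-1) (x - α⁻¹))⁻¹ = min α (x + 1)⁻¹ := by
  rcases le_total (-1) (x - α⁻¹) with h | h
  · rw [min_eq_left h, sub_neg_eq_add, min_eq_right]
    exact inv_le_of_inv_le₀ hα (by linarith)
  · rw [min_eq_right h, sub_sub_cancel, inv_inv, min_eq_left]
    exact le_inv_of_le_inv₀ (by linarith) (by linarith)

lemma continuousOn_min_inv_add_one (α : ℝ) :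
    ContinuousOn (fun x : ℝ => min α (x + 1)⁻¹) (Ioi (-1)) := by
  fun_prop (disch := intro x hx; linarith [mem_Ioi.mp hx])

lemma μnat_Ωα_eq_integral {α : ℝ} (hα : 0 < α) :
    μnat (Ωα α) = ENNReal.ofReal ((log 2)⁻¹ * ∫ x in (0 : ℝ)..1, min α (x + 1)⁻¹) := by
  have hc : 0 ≤ (log 2)⁻¹ := inv_nonneg.mpr (log_nonneg one_le_two)
  have hm : Measurable fun x : ℝ => min (-1) (x - α⁻¹) := by fun_prop
  have hS : MeasurableSet (Ωα α) := by
    rw [Ωα_eq_subgraph hα]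
    exact (measurable_fst measurableSet_Ioo).inter
      (measurableSet_lt measurable_snd (hm.comp measurable_fst))
  have hfibre : ∀ x ∈ Ioo (0 : ℝ) 1,
      ∫⁻ y in Iio (min (-1) (x - α⁻¹)), ENNReal.ofReal ((x - y)⁻¹ ^ 2) =
        ENNReal.ofReal (min α (x + 1)⁻¹) := fun x hx => by
    rw [lintegral_Iio_inv_sub_sq ((min_le_left _ _).trans_lt (by linarith [hx.1])),
      inv_sub_min_eq_min_inv hα hx.1]
  have hint : IntegrableOn (fun x : ℝ => min α (x + 1)⁻¹) (Ioc 0 1) :=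
    ((continuousOn_min_inv_add_one α).mono fun x hx =>
      show -1 < x by linarith [hx.1]).integrableOn_Icc.mono_set Ioc_subset_Icc_self
  have hnonneg : 0 ≤ᵐ[volume.restrict (Ioc (0 : ℝ) 1)] fun x => min α (x + 1)⁻¹ :=
    ae_restrict_of_forall_mem measurableSet_Ioc fun x hx =>
      le_min hα.le (inv_nonneg.mpr (by linarith [hx.1]))
  calc μnat (Ωα α)
      = ∫⁻ p in Ωα α, ENNReal.ofReal (log 2)⁻¹ * ENNReal.ofReal ((p.1 - p.2)⁻¹ ^ 2) := by
        rw [μnat, withDensity_apply _ hS, Measure.restrict_restrict hS,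
          inter_eq_left.mpr (show Ωα α ⊆ Ωset from sep_subset _ _)]
        simp_rw [ENNReal.ofReal_mul hc]
    _ = ENNReal.ofReal (log 2)⁻¹ *
          ∫⁻ x in Ioo 0 1, ∫⁻ y in Iio (min (-1) (x - α⁻¹)), ENNReal.ofReal ((x - y)⁻¹ ^ 2) := by
        rw [lintegral_const_mul _ (by fun_prop), Ωα_eq_subgraph hα, Measure.volume_eq_prod,
          setLIntegral_prod_subgraph measurableSet_Ioo hm (by fun_prop)]
    _ = ENNReal.ofReal (log 2)⁻¹ * ∫⁻ x in Ioc 0 1, ENNReal.ofReal (min α (x + 1)⁻¹) := by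
        rw [setLIntegral_congr_fun measurableSet_Ioo hfibre,
          Measure.restrict_congr_set Ioo_ae_eq_Ioc]
    _ = ENNReal.ofReal ((log 2)⁻¹ * ∫ x in (0 : ℝ)..1, min α (x + 1)⁻¹) := by
        rw [intervalIntegral.integral_of_le zero_le_one, ENNReal.ofReal_mul hc,
          ofReal_integral_eq_lintegral_ofReal hint hnonneg]

lemma integral_min_inv_add_one_of_le_half {α : ℝ} (h : α ≤ 1 / 2) :
    ∫ x in (0 : ℝ)..1, min α (x + 1)⁻¹ = α := by
  rw [intervalIntegral.integral_congr (g := fun _ => α) fun x hx => min_eq_left ?_]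
  · simp
  rw [uIcc_of_le zero_le_one] at hx
  calc α ≤ 2⁻¹ := by linarith
    _ ≤ (x + 1)⁻¹ := inv_anti₀ (by linarith [hx.1]) (by linarith [hx.2])

lemma integral_min_inv_add_one_of_half_le {α : ℝ} (h₁ : 1 / 2 ≤ α) (h₂ : α ≤ 1) :
    ∫ x in (0 : ℝ)..1, min α (x + 1)⁻¹ = 1 - α + log 2 + log α := by
  have hα : 0 < α := by linarith
  have hb₀ : 0 ≤ α⁻¹ - 1 := by rw [sub_nonneg]; exact one_le_inv₀ hα |>.mpr h₂
  have hb₁ : α⁻¹ - 1 ≤ 1 := by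
    rw [sub_le_iff_le_add, one_add_one_eq_two]
    exact inv_le_of_inv_le₀ two_pos (by linarith)
  have hint : ∀ a b, a ∈ Icc (0 : ℝ) 1 → b ∈ Icc (0 : ℝ) 1 →
      IntervalIntegrable (fun x : ℝ => min α (x + 1)⁻¹) volume a b := fun a b ha hb =>
    ((continuousOn_min_inv_add_one α).mono fun x hx =>
      show -1 < x by linarith [(uIcc_subset_Icc ha hb hx).1]).intervalIntegrable
  have hconst : ∫ x in (0 : ℝ)..α⁻¹ - 1, min α (x + 1)⁻¹ = 1 - α := by
    rw [intervalIntegral.integral_congr (g := fun _ => α) fun x hx => min_eq_left ?_]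
    · simp [field]
    rw [uIcc_of_le hb₀] at hx
    exact le_inv_of_le_inv₀ (by linarith [hx.1]) (by linarith [hx.2])
  have hlog : ∫ x in α⁻¹ - 1..1, min α (x + 1)⁻¹ = log 2 + log α := by
    rw [intervalIntegral.integral_congr (g := fun x => (x + 1)⁻¹) fun x hx => min_eq_right ?_]
    · rw [intervalIntegral.integral_comp_add_right (fun x => x⁻¹),
        sub_add_cancel, one_add_one_eq_two, integral_inv_of_pos (inv_pos.mpr hα) two_pos,
        div_inv_eq_mul, log_mul two_ne_zero hα.ne']
    rw [uIcc_of_le hb₁] at hx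
    exact inv_le_of_inv_le₀ hα (by linarith [hx.1])
  rw [← intervalIntegral.integral_add_adjacent_intervals
    (hint _ _ ⟨le_rfl, zero_le_one⟩ ⟨hb₀, hb₁⟩) (hint _ _ ⟨hb₀, hb₁⟩ ⟨zero_le_one, le_rfl⟩),
    hconst, hlog]
  ring

/-- the value of `μ(Ω_α)`. -/
theorem stmt_4 (α : ℝ) (hα : α ∈ Set.Ioc (0:ℝ) 1) :
    (1/2 ≤ α →
      μnat (Ωα α) = ENNReal.ofReal ((Real.log 2)⁻¹ * (1 - α + Real.log 2 + Real.log α))) ∧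
    (α ≤ 1/2 → μnat (Ωα α) = ENNReal.ofReal ((Real.log 2)⁻¹ * α)) :=
  ⟨fun h => by rw [μnat_Ωα_eq_integral hα.1, integral_min_inv_add_one_of_half_le h hα.2],
    fun h => by rw [μnat_Ωα_eq_integral hα.1, integral_min_inv_add_one_of_le_half h]⟩
end
end

section
/- The map Φ⁺(x,y) = (1/(x−y), −xy/(x−y)) is injective on Ω = (0,1) × (−∞,−1), its image is contained in the open triangle Λ = {(w,z) : w > 0, z > 0, w + z < 1}, and for every (w,z) ∈ Λ the point H(w,z) = ((1 − √(1 − 4wz))/(2w), (−1 − √(1 − 4wz))/(2w)) lies in Ω and satisfies Φ⁺(H(w,z)) = (w,z). -/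
open Real MeasureTheory Filter Set
open scoped Classical

noncomputable section

/-- `Φ⁺(x,y) = (1/(x-y), -xy/(x-y))`. -/
def Φplus (p : ℝ × ℝ) : ℝ × ℝ := (1/(p.1 - p.2), -p.1 * p.2 / (p.1 - p.2))

/-- The open triangle `Λ = {(w,z) : w > 0, z > 0, w + z < 1}`. -/
def Λset : Set (ℝ × ℝ) := {p | 0 < p.1 ∧ 0 < p.2 ∧ p.1 + p.2 < 1}

/-- `H(w,z) = ((1 - √(1-4wz))/(2w), (-1 - √(1-4wz))/(2w))`. -/
def Hmap (p : ℝ × ℝ) : ℝ × ℝ :=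
  ((1 - Real.sqrt (1 - 4*p.1*p.2)) / (2*p.1),
   (-1 - Real.sqrt (1 - 4*p.1*p.2)) / (2*p.1))

/-! If `Φ⁺(x,y) = (w,z)` then `x + (-y) = 1/w` and `x · (-y) = z/w`, so `x < -y` are the two
roots of `w t² - t + z = 0`, whose discriminant is `1 - 4wz = ((x+y)/(x-y))²`. On `Ω` we have
`x + y < 0`, which fixes the sign of the square root and shows that `H` recovers `(x, -y)` as
(smaller root, larger root); conversely, on `Λ` both roots of that quadratic are real and positive
and `H` lands in `Ω`. -/

lemma sqrt_discr_Φplus {x y : ℝ} (hxy : y < x) (hsum : x + y < 0) :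
    √(1 - 4 * (Φplus (x, y)).1 * (Φplus (x, y)).2) = -(x + y) / (x - y) := by
  have hd : 0 < x - y := sub_pos.mpr hxy
  have hdiscr : 1 - 4 * (Φplus (x, y)).1 * (Φplus (x, y)).2 = (-(x + y) / (x - y)) ^ 2 := by
    simp only [Φplus]
    field_simp
    ring
  rw [hdiscr, Real.sqrt_sq (div_nonneg (by linarith) hd.le)]

lemma mapsTo_Φplus : MapsTo Φplus Ωset Λset := by
  rintro ⟨x, y⟩ ⟨⟨hx0, hx1⟩, hy⟩
  simp only [Set.mem_Iio] at hy
  have hd : 0 < x - y := by linarith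
  refine ⟨one_div_pos.mpr hd, div_pos (by nlinarith) hd, ?_⟩
  change 1 / (x - y) + -x * y / (x - y) < 1
  rw [← add_div, div_lt_one hd]
  nlinarith

lemma leftInvOn_Hmap_Φplus : LeftInvOn Hmap Φplus Ωset := by
  rintro ⟨x, y⟩ ⟨⟨hx0, hx1⟩, hy⟩
  simp only [Set.mem_Iio] at hy
  have hd : x - y ≠ 0 := by linarith
  have hS := sqrt_discr_Φplus (x := x) (y := y) (by linarith) (by linarith)
  simp only [Hmap, hS]
  simp only [Φplus]
  ext <;> field_simp <;> ring

lemma one_sub_four_mul_pos_of_mem_Λset {p : ℝ × ℝ} (hp : p ∈ Λset) : 0 < 1 - 4 * p.1 * p.2 := by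
  obtain ⟨hw, hz, hwz⟩ := hp
  nlinarith [sq_nonneg (p.1 - p.2)]

lemma mapsTo_Hmap : MapsTo Hmap Λset Ωset := by
  rintro ⟨w, z⟩ ⟨hw, hz, hwz⟩
  dsimp only at hw hz hwz
  have hS : |1 - 2 * w| < √(1 - 4 * w * z) := by
    refine Real.lt_sqrt_of_sq_lt ?_
    rw [sq_abs]
    nlinarith [mul_pos hw (sub_pos.mpr hwz)]
  obtain ⟨hS₁, hS₂⟩ := abs_lt.mp hS
  have hS_lt_one : √(1 - 4 * w * z) < 1 :=
    (Real.sqrt_lt' one_pos).mpr (by nlinarith [mul_pos hw hz])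
  simp only [Hmap, Ωset, Set.mem_prod, Set.mem_Ioo, Set.mem_Iio]
  refine ⟨⟨div_pos ?_ (by positivity), ?_⟩, ?_⟩
  · linarith
  · rw [div_lt_one (by positivity)]
    linarith
  · rw [div_lt_iff₀ (by positivity)]
    linarith

lemma leftInvOn_Φplus_Hmap : LeftInvOn Φplus Hmap Λset := by
  rintro ⟨w, z⟩ hp
  have hSsq : √(1 - 4 * w * z) ^ 2 = 1 - 4 * w * z :=
    Real.sq_sqrt (one_sub_four_mul_pos_of_mem_Λset hp).le
  have hw : w ≠ 0 := hp.1.ne'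
  have hdiff : (1 - √(1 - 4 * w * z)) / (2 * w) - (-1 - √(1 - 4 * w * z)) / (2 * w) = 1 / w := by
    field_simp
    ring
  simp only [Φplus, Hmap, hdiff, one_div_one_div]
  ext
  · rfl
  · field_simp
    linear_combination -hSsq

/-- `Φ⁺` is injective on `Ω`, its image is contained in `Λ`, and `H` is a
right inverse landing in `Ω`. -/
theorem stmt_13 :
    Set.InjOn Φplus Ωset ∧ Φplus '' Ωset ⊆ Λset ∧
    ∀ p ∈ Λset, Hmap p ∈ Ωset ∧ Φplus (Hmap p) = p :=
  ⟨leftInvOn_Hmap_Φplus.injOn, mapsTo_Φplus.image_subset,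
    fun _ hp => ⟨mapsTo_Hmap hp, leftInvOn_Φplus_Hmap hp⟩⟩
end
end
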